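/- Let Ω ⊆ ℝ^d be an open, connected and simply connected set, and let Q : Ω → M₃(ℝ) be continuous with Q(x) ∈ 𝒬 for all x ∈ Ω. Then there exists a continuous map n : Ω → 𝕊² with Q(x) = P(n(x)) for all x ∈ Ω. -/

import Mathlib

/-!
The map `v ↦ v vᵀ` from the unit sphere onto its image identifies exactly antipodal points, and
no open hemisphere contains a pair of antipodal points, so it is the quotient covering map of the
action of `{±1}` on the sphere. A covering map lifts every continuous map out of a simply
connected, locally path-connected space; open subsets of `ℝ^d` are locally path-connected. For
`s ≠ 0`, `Q = P(n)` just says `n nᵀ = s⁻¹ Q + Id / 3`.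
-/

/-- `P(n) = s (n⊗n − (1/3) Id)`. -/
noncomputable def Pmat (s : ℝ) (n : Fin 3 → ℝ) : Matrix (Fin 3) (Fin 3) ℝ :=
  s • (Matrix.vecMulVec n n - (1 / 3 : ℝ) • (1 : Matrix (Fin 3) (Fin 3) ℝ))

open Matrix Metric Set Topology

theorem Real.unitSphere_eq_one_or_eq_neg_one (g : sphere (0 : ℝ) 1) : g = 1 ∨ g = -1 := by
  have hg : |(g : ℝ)| = 1 := by rw [← Real.norm_eq_abs, ← mem_sphere_zero_iff_norm]; exact g.2
  rcases (abs_eq zero_le_one).mp hg with h | h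
  exacts [Or.inl (Subtype.ext h), Or.inr (Subtype.ext h)]

theorem Metric.sphere.neg_one_smul {𝕜 E : Type*} [NormedField 𝕜] [SeminormedAddCommGroup E]
    [NormedSpace 𝕜 E] {r : ℝ} (v : sphere (0 : E) r) : (-1 : sphere (0 : 𝕜) 1) • v = -v :=
  Subtype.ext (_root_.neg_one_smul 𝕜 (v : E))

theorem Matrix.vecMulVec_self_eq_vecMulVec_self_iff {R n : Type*} [CommRing R] [IsDomain R]
    {v w : n → R} : vecMulVec w w = vecMulVec v v ↔ w = v ∨ w = -v := by
  constructor
  · intro h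
    have hij : ∀ i j, w i * w j = v i * v j := fun i j => congrFun (congrFun h i) j
    by_cases hv : v = 0
    · subst hv
      exact Or.inl (funext fun j => by simpa using hij j j)
    obtain ⟨i, hi⟩ := Function.ne_iff.mp hv
    rcases mul_self_eq_mul_self_iff.mp (hij i i) with hwi | hwi
    · exact Or.inl (funext fun j => mul_left_cancel₀ hi (by rw [← hij i j, hwi]))
    · refine Or.inr (funext fun j => mul_left_cancel₀ hi ?_)
      rw [Pi.neg_apply, mul_neg, ← hij i j, hwi]
      ring
  · rintro (rfl | rfl)
    · rfl
    · simp [vecMulVec_neg, neg_vecMulVec]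

section SelfOuter

variable (ι : Type*) [Fintype ι]

noncomputable def selfOuter (v : sphere (0 : EuclideanSpace ℝ ι) 1) : Matrix ι ι ℝ :=
  vecMulVec (v : EuclideanSpace ℝ ι) (v : EuclideanSpace ℝ ι)

variable {ι}

theorem selfOuter_eq_selfOuter_iff {v w : sphere (0 : EuclideanSpace ℝ ι) 1} :
    selfOuter ι w = selfOuter ι v ↔ w = v ∨ w = -v := by
  rw [selfOuter, selfOuter, vecMulVec_self_eq_vecMulVec_self_iff, ← WithLp.ofLp_neg,
    (WithLp.ofLp_injective 2).eq_iff, (WithLp.ofLp_injective 2).eq_iff, ← coe_neg_sphere,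
    Subtype.coe_inj, Subtype.coe_inj]

theorem continuous_selfOuter : Continuous (selfOuter ι) := by
  unfold selfOuter
  fun_prop

theorem isQuotientCoveringMap_selfOuter :
    IsQuotientCoveringMap (rangeFactorization (selfOuter ι)) (sphere (0 : ℝ) 1) where
  toIsQuotientMap :=
    .of_surjective_continuous rangeFactorization_surjective continuous_selfOuter.rangeFactorization
  apply_eq_iff_mem_orbit {w v} := by
    rw [← Subtype.coe_inj, rangeFactorization_coe, rangeFactorization_coe,
      selfOuter_eq_selfOuter_iff]
    constructor
    · rintro (rfl | rfl)
      exacts [⟨1, one_smul _ _⟩, ⟨-1, sphere.neg_one_smul v⟩]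
    · rintro ⟨g, rfl⟩
      rcases Real.unitSphere_eq_one_or_eq_neg_one g with rfl | rfl
      exacts [Or.inl (one_smul _ _), Or.inr (sphere.neg_one_smul v)]
  disjoint e := by
    refine ⟨{v | 0 < inner ℝ (v : EuclideanSpace ℝ ι) e}, ?_,
      fun g ⟨_, ⟨u, hu, rfl⟩, hgu⟩ => ?_⟩
    · exact (isOpen_lt continuous_const (by fun_prop)).mem_nhds (by simp)
    · rcases Real.unitSphere_eq_one_or_eq_neg_one g with rfl | rfl
      · rfl
      have hu : 0 < inner ℝ (u : EuclideanSpace ℝ ι) e := hu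
      have hgu : 0 < inner ℝ ((-u : sphere (0 : EuclideanSpace ℝ ι) 1) : EuclideanSpace ℝ ι) e := by
        rw [← sphere.neg_one_smul (𝕜 := ℝ)]
        exact hgu
      rw [coe_neg_sphere, inner_neg_left] at hgu
      linarith

end SelfOuter

theorem IsCoveringMap.exists_continuous_lift_of_forall_mem_range {E X A : Type*}
    [TopologicalSpace E] [TopologicalSpace X] [TopologicalSpace A]
    [SimplyConnectedSpace A] [LocallyPathConnectedSpace A] {p : E → X}
    (cov : IsCoveringMap (rangeFactorization p)) {f : A → X} (hf : Continuous f)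
    (hfp : ∀ a, f a ∈ range p) : ∃ F : A → E, Continuous F ∧ p ∘ F = f := by
  obtain ⟨a₀⟩ : Nonempty A := inferInstance
  obtain ⟨e₀, he₀⟩ := hfp a₀
  obtain ⟨F, ⟨-, hF⟩, -⟩ := cov.existsUnique_continuousMap_lifts
    ⟨fun a => ⟨f a, hfp a⟩, hf.subtype_mk _⟩ a₀ e₀ (Subtype.ext he₀)
  exact ⟨F, F.continuous, funext fun a => congrArg Subtype.val (congrFun hF a)⟩

theorem eq_Pmat_iff {s : ℝ} (hs : s ≠ 0) {A : Matrix (Fin 3) (Fin 3) ℝ} {n : Fin 3 → ℝ} :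
    A = Pmat s n ↔ vecMulVec n n = s⁻¹ • A + (1 / 3 : ℝ) • 1 := by
  rw [Pmat, ← inv_smul_eq_iff₀ hs, ← sub_eq_iff_eq_add, eq_comm]

theorem stmt6_general (s : ℝ) (hs : s ≠ 0)
    (d : ℕ) (Ω : Set (EuclideanSpace ℝ (Fin d)))
    (hopen : IsOpen Ω) (hsc : SimplyConnectedSpace Ω)
    (Q : Ω → Matrix (Fin 3) (Fin 3) ℝ) (hQc : Continuous Q)
    (hQval : ∀ x, ∃ m : EuclideanSpace ℝ (Fin 3), ‖m‖ = 1 ∧ Q x = Pmat s (fun i => m i)) :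
    ∃ n : Ω → EuclideanSpace ℝ (Fin 3), Continuous n ∧
      ∀ x, ‖n x‖ = 1 ∧ Q x = Pmat s (fun i => n x i) := by
  have := hopen.locallyPathConnectedSpace
  have hQ_mem : ∀ x, s⁻¹ • Q x + (1 / 3 : ℝ) • 1 ∈ range (selfOuter (Fin 3)) := fun x => by
    obtain ⟨m, hm, hQm⟩ := hQval x
    exact ⟨⟨m, mem_sphere_zero_iff_norm.mpr hm⟩, (eq_Pmat_iff hs).mp hQm⟩
  obtain ⟨n, hn, hnQ⟩ := (isQuotientCoveringMap_selfOuter (ι := Fin 3)).isCoveringMap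
    |>.exists_continuous_lift_of_forall_mem_range (by fun_prop) hQ_mem
  refine ⟨fun x => n x, continuous_subtype_val.comp hn, fun x => ⟨norm_eq_of_mem_sphere (n x), ?_⟩⟩
  exact (eq_Pmat_iff hs).mpr (congrFun hnQ x)

/-- a continuous `𝒬`-valued map on an open, connected, simply connected
subset of `ℝ^d` admits a continuous lifting to `𝕊²`. -/
theorem stmt6 (s : ℝ) (hs : s ≠ 0) (hs' : s ∈ Set.Icc (-(1 / 2) : ℝ) 1)
    (d : ℕ) (Ω : Set (EuclideanSpace ℝ (Fin d)))
    (hopen : IsOpen Ω) (hconn : IsConnected Ω) (hsc : SimplyConnectedSpace Ω)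
    (Q : Ω → Matrix (Fin 3) (Fin 3) ℝ) (hQc : Continuous Q)
    (hQval : ∀ x, ∃ m : EuclideanSpace ℝ (Fin 3), ‖m‖ = 1 ∧ Q x = Pmat s (fun i => m i)) :
    ∃ n : Ω → EuclideanSpace ℝ (Fin 3), Continuous n ∧
      ∀ x, ‖n x‖ = 1 ∧ Q x = Pmat s (fun i => n x i) :=
  stmt6_general s hs d Ω hopen hsc Q hQc hQval
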